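/- Let a = (a_n)_{n∈ℤ} be the sequence defined by a_n = μ(k) if n = k² for some k ∈ ℕ and a_n = 0 otherwise. Then the subshift (X_a, σ) generated by a has topological entropy zero, i.e., lim_{n→∞} (log p_a(n))/n = 0. -/
import Mathlib


open Filter Classical

/-- `wordCount x n` is the number of distinct words of length `n` occurring in `x`. -/
noncomputable def wordCount {S : Type*} (x : ℤ → S) (n : ℕ) : ℕ :=
  Set.ncard {w : Fin n → S | ∃ m : ℤ, ∀ i : Fin n, w i = x (m + (i : ℤ))}

/-- The sequence `a` with `a_n = μ(k)` if `n = k²` for some `k ∈ ℕ`, and `a_n = 0`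
otherwise. (When `n = k²` with `k ∈ ℕ`, one has `k = √(n.toNat)`.) -/
noncomputable def seqA : ℤ → ℤ := fun n =>
  if ∃ k : ℕ, n = (k : ℤ) ^ 2 then ArithmeticFunction.moebius n.toNat.sqrt else 0

lemma seqA_sq (k : ℕ) : seqA ((k:ℤ)^2) = ArithmeticFunction.moebius k := by
  unfold seqA
  rw [if_pos ⟨k, rfl⟩]
  congr 1
  have h : ((k:ℤ)^2).toNat = k^2 := by
    rw [show ((k:ℤ)^2) = ((k^2 : ℕ) : ℤ) by push_cast; ring, Int.toNat_natCast]
  rw [h, Nat.sqrt_eq']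

lemma seqA_spec (t : ℤ) (h : seqA t ≠ 0) :
    (∃ k : ℕ, t = (k:ℤ)^2) ∧ (seqA t = 1 ∨ seqA t = -1) := by
  have hc : ∃ k : ℕ, t = (k:ℤ)^2 := by
    by_contra hc
    exact h (by unfold seqA; rw [if_neg hc])
  refine ⟨hc, ?_⟩
  obtain ⟨k, rfl⟩ := hc
  rw [seqA_sq] at h ⊢
  have := ArithmeticFunction.moebius_ne_zero_iff_eq_or.mp h
  exact_mod_cast this

lemma log_nat_mono {a b : ℕ} (h : a ≤ b) : Real.log a ≤ Real.log b := by
  rcases Nat.eq_zero_or_pos a with rfl | ha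
  · simpa using Real.log_natCast_nonneg b
  · exact Real.log_le_log (by exact_mod_cast ha) (by exact_mod_cast h)

lemma wordCount_seqA_le (n : ℕ) : wordCount seqA n ≤ (n + 2)^2 := by
  rcases Nat.eq_zero_or_pos n with rfl | hn
  · unfold wordCount
    calc Set.ncard {w : Fin 0 → ℤ | ∃ m : ℤ, ∀ i : Fin 0, w i = seqA (m + i)}
        ≤ (Set.univ : Set (Fin 0 → ℤ)).ncard := Set.ncard_le_ncard (Set.subset_univ _)
      _ = Nat.card (Fin 0 → ℤ) := Set.ncard_univ _
      _ = 1 := Nat.card_unique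
      _ ≤ (0+2)^2 := by norm_num
  · set f : ℤ → (Fin n → ℤ) := fun m i => seqA (m + i) with hf
    set g : Fin n × Fin 3 → (Fin n → ℤ) :=
      fun p => Function.update (0 : Fin n → ℤ) p.1 (((p.2 : ℕ) : ℤ) - 1) with hg
    have hW : {w : Fin n → ℤ | ∃ m : ℤ, ∀ i : Fin n, w i = seqA (m + i)} = Set.range f := by
      ext w
      constructor
      · rintro ⟨m, hm⟩; exact ⟨m, (funext fun i => (hm i).symm)⟩
      · rintro ⟨m, rfl⟩; exact ⟨m, fun i => rfl⟩
    have hzero_word : ∀ m : ℤ, (∀ i : Fin n, seqA (m + i) = 0) → f m ∈ Set.range g := by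
      intro m hm
      refine ⟨(⟨0, hn⟩, 1), ?_⟩
      funext i
      have : ((((1 : Fin 3) : ℕ) : ℤ) - 1) = 0 := by norm_num
      simp only [hg, this]
      by_cases hi : i = (⟨0, hn⟩ : Fin n)
      · subst hi; rw [Function.update_self]; exact (hm _).symm
      · rw [Function.update_of_ne hi]; exact (hm i).symm
    have hsub : Set.range f ⊆ f '' (Set.Icc (1 - (n:ℤ)) ((n:ℤ)^2)) ∪ Set.range g := by
      rintro w ⟨m, rfl⟩
      by_cases hm1 : m ∈ Set.Icc (1 - (n:ℤ)) ((n:ℤ)^2)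
      · exact Or.inl ⟨m, hm1, rfl⟩
      right
      simp only [Set.mem_Icc, not_and_or, not_le] at hm1
      rcases hm1 with hm1 | hm1
      · -- m < 1 - n : all entries nonpositive hence zero
        apply hzero_word
        intro i
        have hle : m + (i:ℤ) ≤ 0 := by
          have := i.isLt
          omega
        by_contra hne
        obtain ⟨⟨k, hk⟩, -⟩ := seqA_spec _ hne
        have : (0:ℤ) ≤ (k:ℤ)^2 := by positivity
        have hk0 : (k:ℤ) = 0 := by nlinarith
        have hk0n : k = 0 := by exact_mod_cast hk0
        exact hne (by rw [hk, hk0n, seqA_sq]; simp)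
      · -- m > n^2 : at most one nonzero entry
        by_cases hz : ∀ i : Fin n, seqA (m + i) = 0
        · exact hzero_word m hz
        push_neg at hz
        obtain ⟨j, hj⟩ := hz
        have huniq : ∀ i : Fin n, i ≠ j → seqA (m + i) = 0 := by
          intro i hij
          by_contra hi
          obtain ⟨⟨k, hk⟩, -⟩ := seqA_spec _ hi
          obtain ⟨⟨l, hl⟩, -⟩ := seqA_spec _ hj
          have hkl : k ≠ l := by
            intro h
            apply hij
            apply Fin.val_injective
            have : (i:ℤ) = (j:ℤ) := by rw [h] at hk; omega
            exact_mod_cast this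
          have hkn : (n:ℤ) < (k:ℤ) := by
            have h1 : (n:ℤ)^2 < (k:ℤ)^2 := by have := i.isLt; push_cast at *; nlinarith
            nlinarith [Int.natCast_nonneg k, Int.natCast_nonneg n]
          have hln : (n:ℤ) < (l:ℤ) := by
            have h1 : (n:ℤ)^2 < (l:ℤ)^2 := by have := j.isLt; push_cast at *; nlinarith
            nlinarith [Int.natCast_nonneg l, Int.natCast_nonneg n]
          have hi' : (i:ℤ) < n := by exact_mod_cast i.isLt
          have hj' : (j:ℤ) < n := by exact_mod_cast j.isLt
          have hi0 : (0:ℤ) ≤ (i:ℤ) := by positivity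
          have hj0 : (0:ℤ) ≤ (j:ℤ) := by positivity
          rcases lt_or_gt_of_ne hkl with h | h
          · have : (k:ℤ) + 1 ≤ (l:ℤ) := by exact_mod_cast h
            nlinarith
          · have : (l:ℤ) + 1 ≤ (k:ℤ) := by exact_mod_cast h
            nlinarith
        obtain ⟨-, hval⟩ := seqA_spec _ hj
        have hrep : ∀ v : Fin 3, (((v:ℕ):ℤ) - 1) = seqA (m + j) → f m = g (j, v) := by
          intro v hv
          funext i
          simp only [hg, hf]
          by_cases hi : i = j
          · subst hi; rw [Function.update_self, hv]
          · rw [Function.update_of_ne hi]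
            exact huniq i hi
        rcases hval with hval | hval
        · exact ⟨(j, 2), (hrep 2 (by norm_num [hval])).symm⟩
        · exact ⟨(j, 0), (hrep 0 (by norm_num [hval])).symm⟩
    have hIccFin : (Set.Icc (1 - (n:ℤ)) ((n:ℤ)^2)).Finite := Set.finite_Icc _ _
    have hbig : (f '' (Set.Icc (1 - (n:ℤ)) ((n:ℤ)^2)) ∪ Set.range g).Finite :=
      (hIccFin.image f).union (Set.finite_range g)
    have h1 : wordCount seqA n ≤ (f '' (Set.Icc (1 - (n:ℤ)) ((n:ℤ)^2)) ∪ Set.range g).ncard := by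
      unfold wordCount
      rw [hW]
      exact Set.ncard_le_ncard hsub hbig
    have h2 : (f '' (Set.Icc (1 - (n:ℤ)) ((n:ℤ)^2))).ncard ≤ n^2 + n := by
      calc (f '' (Set.Icc (1 - (n:ℤ)) ((n:ℤ)^2))).ncard
          ≤ (Set.Icc (1 - (n:ℤ)) ((n:ℤ)^2)).ncard := Set.ncard_image_le hIccFin
        _ = n^2 + n := by
            rw [← Finset.coe_Icc, Set.ncard_coe_finset, Int.card_Icc]
            rw [show ((n:ℤ)^2 + 1 - (1 - (n:ℤ))) = ((n^2 + n : ℕ) : ℤ) by push_cast; ring,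
              Int.toNat_natCast]
    have h3 : (Set.range g).ncard ≤ 3 * n := by
      calc (Set.range g).ncard = Nat.card (Set.range g) := (Nat.card_coe_set_eq _).symm
        _ ≤ Nat.card (Fin n × Fin 3) := Finite.card_range_le g
        _ = 3 * n := by simp [Nat.card_eq_fintype_card, Nat.mul_comm]
    calc wordCount seqA n ≤ _ := h1
      _ ≤ (f '' (Set.Icc (1 - (n:ℤ)) ((n:ℤ)^2))).ncard + (Set.range g).ncard :=
          Set.ncard_union_le _ _
      _ ≤ (n^2 + n) + 3 * n := Nat.add_le_add h2 h3
      _ ≤ (n + 2)^2 := by nlinarith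

/-- The subshift generated by `seqA` has topological entropy zero. -/
theorem entropy_seqA_zero :
    Tendsto (fun n : ℕ => Real.log (wordCount seqA n) / n) atTop (nhds 0) := by
  have hub : Tendsto (fun n : ℕ => 2 * Real.log ((n:ℝ) + 2) / n) atTop (nhds 0) := by
    have h1 : Tendsto (fun x : ℝ => Real.log x ^ 1 / (1 * x + (-2))) atTop (nhds 0) :=
      Real.tendsto_pow_log_div_mul_add_atTop 1 (-2) 1 one_ne_zero
    have h2 : Tendsto (fun n : ℕ => ((n:ℝ) + 2)) atTop atTop :=
      tendsto_atTop_add_const_right _ 2 tendsto_natCast_atTop_atTop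
    have h3 := h1.comp h2
    have h4 : Tendsto (fun n : ℕ => Real.log ((n:ℝ) + 2) / n) atTop (nhds 0) := by
      convert h3 using 2 with n
      simp [Function.comp]
    have := h4.const_mul (2:ℝ)
    simpa [mul_div_assoc] using this
  apply squeeze_zero (fun n => div_nonneg (Real.log_natCast_nonneg _) (Nat.cast_nonneg n)) _ hub
  intro n
  rcases Nat.eq_zero_or_pos n with rfl | hn
  · simp
  have hlog : Real.log (wordCount seqA n) ≤ 2 * Real.log ((n:ℝ) + 2) := by
    have h := log_nat_mono (wordCount_seqA_le n)
    have h2 : Real.log (((n + 2)^2 : ℕ) : ℝ) = 2 * Real.log ((n:ℝ) + 2) := by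
      push_cast
      rw [Real.log_pow]
      push_cast
      ring
    linarith [h, h2.le, h2.ge]
  have hn' : (0:ℝ) < n := by exact_mod_cast hn
  exact div_le_div_of_nonneg_right hlog hn'.le
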